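/- There is no continuous function f : ℝ → ℝ with the following properties: f is periodic with period 1; there is a finite partition 0 = x₀ < x₁ < ⋯ < x_m = 1 such that f is concave on each interval [x_i, x_{i+1}]; at each partition point x_i, f has a right derivative d₊(x_i) and a left derivative d₋(x_i) with d₊(x_i) ≤ d₋(x_i); and d₊(x_j) < d₋(x_j) strictly for at least one j. (This synthesizes the paper's one-dimensional argument: the Duistermaat–Heckman function of a circle-valued momentum map is concave on each chamber with non-positive derivative jumps at walls, and a fixed-point component forces a strictly negative jump; since such a function cannot exist on all of S¹, the momentum map is not surjective and the action is Hamiltonian.) -/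

import Mathlib

/-!
On a concave piece `[a, b]` the secant slope separates the one-sided derivatives at the ends:
`d₋(b) ≤ (f b - f a) / (b - a) ≤ d₊(a)`. Hence going once around the circle, `d₊` decreases by
at least the sum of the jumps `d₋(xᵢ) - d₊(xᵢ) ≥ 0` met on the way; by periodicity it returns to
its initial value, so every jump vanishes.
-/

open Filter Set Finset Topology

lemma hasDerivWithinAt_iff_tendsto_div {𝕜 : Type*} [NontriviallyNormedField 𝕜] {f : 𝕜 → 𝕜}
    {a d : 𝕜} {s : Set 𝕜} (ha : a ∉ s) :
    HasDerivWithinAt f d s a ↔ Tendsto (fun y => (f y - f a) / (y - a)) (𝓝[s] a) (𝓝 d) := by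
  rw [hasDerivWithinAt_iff_tendsto_slope' ha, slope_fun_def_field]

lemma Function.Periodic.hasDerivWithinAt_add_period {𝕜 F : Type*} [NontriviallyNormedField 𝕜]
    [NormedAddCommGroup F] [NormedSpace 𝕜 F] {f : 𝕜 → F} {c a : 𝕜} {d : F} {s : Set 𝕜}
    (hf : Function.Periodic f c) (h : HasDerivWithinAt f d s a) :
    HasDerivWithinAt f d ((· - c) ⁻¹' s) (a + c) := by
  have hshift := HasDerivWithinAt.scomp (a + c) (by simpa using h)
    ((hasDerivWithinAt_id _ _).sub_const c) (mapsTo_preimage _ s)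
  simpa [Function.comp_def, hf.sub_eq] using hshift

lemma ConcaveOn.le_of_hasDerivWithinAt_Iio_of_hasDerivWithinAt_Ioi {S : Set ℝ} {f : ℝ → ℝ}
    {a b da db : ℝ} (hf : ConcaveOn ℝ S f) (ha : a ∈ S) (hb : b ∈ S) (hab : a < b)
    (hdb : HasDerivWithinAt f db (Iio b) b) (hda : HasDerivWithinAt f da (Ioi a) a) :
    db ≤ da :=
  (hf.le_slope_of_hasDerivWithinAt_Iio ha hb hab hdb).trans
    (hf.slope_le_of_hasDerivWithinAt_Ioi ha hb hab hda)

lemma sum_range_sub_le_sub_of_succ_le {α : Type*} [AddCommGroup α] [PartialOrder α]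
    [IsOrderedAddMonoid α] (u v : ℕ → α) (m : ℕ) (h : ∀ i < m, v (i + 1) ≤ u i) :
    ∑ i ∈ range m, (v (i + 1) - u (i + 1)) ≤ u 0 - u m := by
  rw [← sum_range_sub' u m]
  refine sum_le_sum fun i hi => ?_
  simpa using h i (mem_range.1 hi)

/-- There is no continuous `1`-periodic function on `ℝ` that is piecewise
concave on a finite partition `0 = x₀ < x₁ < ⋯ < x_m = 1`, with non-positive
derivative jumps `d₊(xᵢ) ≤ d₋(xᵢ)` at every partition point and a strictly
negative jump at some partition point. -/
theorem no_periodic_piecewise_concave_with_strict_jump :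
    ¬ ∃ f : ℝ → ℝ, Continuous f ∧ (∀ x : ℝ, f (x + 1) = f x) ∧
      ∃ m : ℕ, 0 < m ∧ ∃ x : ℕ → ℝ,
        x 0 = 0 ∧ x m = 1 ∧ (∀ i < m, x i < x (i + 1)) ∧
        (∀ i < m, ConcaveOn ℝ (Icc (x i) (x (i + 1))) f) ∧
        ∃ dp dm : ℕ → ℝ,
          (∀ i ≤ m, Tendsto (fun y => (f y - f (x i)) / (y - x i))
            (nhdsWithin (x i) (Ioi (x i))) (nhds (dp i))) ∧
          (∀ i ≤ m, Tendsto (fun y => (f y - f (x i)) / (y - x i))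
            (nhdsWithin (x i) (Iio (x i))) (nhds (dm i))) ∧
          (∀ i ≤ m, dp i ≤ dm i) ∧
          (∃ j ≤ m, dp j < dm j) := by
  rintro ⟨f, -, hper, m, hm, x, hx0, hxm, hlt, hconc, dp, dm, hdp, hdm, hle, j, hj, hjump⟩
  replace hdp (i) (hi : i ≤ m) : HasDerivWithinAt f (dp i) (Ioi (x i)) (x i) :=
    (hasDerivWithinAt_iff_tendsto_div self_notMem_Ioi).2 (hdp i hi)
  replace hdm (i) (hi : i ≤ m) : HasDerivWithinAt f (dm i) (Iio (x i)) (x i) :=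
    (hasDerivWithinAt_iff_tendsto_div self_notMem_Iio).2 (hdm i hi)
  have hdp_m : dp m = dp 0 := by
    have h := Function.Periodic.hasDerivWithinAt_add_period hper (hdp 0 m.zero_le)
    rw [preimage_sub_const_Ioi, hx0, zero_add, ← hxm] at h
    exact (uniqueDiffWithinAt_Ioi _).eq_deriv _ (hdp m le_rfl) h
  have hdm_m : dm m = dm 0 := by
    have h := Function.Periodic.hasDerivWithinAt_add_period hper (hdm 0 m.zero_le)
    rw [preimage_sub_const_Iio, hx0, zero_add, ← hxm] at h
    exact (uniqueDiffWithinAt_Iio _).eq_deriv _ (hdm m le_rfl) h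
  have hstep (i) (hi : i < m) : dm (i + 1) ≤ dp i :=
    (hconc i hi).le_of_hasDerivWithinAt_Iio_of_hasDerivWithinAt_Ioi
      (left_mem_Icc.2 (hlt i hi).le) (right_mem_Icc.2 (hlt i hi).le) (hlt i hi) (hdm (i + 1) hi)
      (hdp i hi.le)
  obtain ⟨k, hk, hjump⟩ : ∃ k < m, dp (k + 1) < dm (k + 1) := by
    rcases j with _ | k
    · exact ⟨m - 1, by omega, by rwa [Nat.sub_add_cancel hm, hdp_m, hdm_m]⟩
    · exact ⟨k, by omega, hjump⟩
  have hjumps_pos : 0 < ∑ i ∈ range m, (dm (i + 1) - dp (i + 1)) :=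
    sum_pos' (fun i hi => sub_nonneg.2 (hle _ (mem_range.1 hi)))
      ⟨k, mem_range.2 hk, sub_pos.2 hjump⟩
  linarith [sum_range_sub_le_sub_of_succ_le dp dm m hstep]
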